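/- arXiv:1404.1484 — 3 statements merged into one kernel-verified Lean document; each statement's English description precedes it below -/
import Mathlib

section
/- Let S = {ω_1,…,ω_s} ⊂ [0,1) be a set of pairwise distinct frequencies, let x_1,…,x_s be nonzero complex amplitudes, and let 1 ≤ L < M be integers with L ≥ s and M − L + 1 ≥ s. Then for every ω ∈ [0,1): ω ∈ S if and only if R(ω) = 0, where R is the noise-space correlation function of the Hankel matrix H. -/
open scoped Real
open Matrix Finset

/-- The imaging vector `φ^L(ω) = (e^{−2πi k ω})_{k=0}^{L} ∈ ℂ^{L+1}`. -/
noncomputable def phiVec (L : ℕ) (ω : ℝ) : EuclideanSpace ℂ (Fin (L + 1)) :=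
  WithLp.toLp 2 (fun k : Fin (L + 1) => Complex.exp (-(2 * Real.pi * Complex.I * ((k : ℕ) : ℂ) * (ω : ℂ))))

/-!
The Hankel matrix factors through Vandermonde matrices of the nodes `zⱼ = e^{−2πiωⱼ}`:
`H = V_L · diag(x) · V_{M−L}ᵀ`. Since `M − L + 1 ≥ s` and the nodes are distinct, the right
factor is onto, so the column space of `H` is spanned by the vectors `φ^L(ωⱼ)`, and `R(t) = 0`
says exactly that `φ^L(t)` lies in it. As `s + 1 ≤ L + 1`, power vectors of `s + 1` distinct
nodes are linearly independent, so this happens only if `e^{−2πit}` is one of the `zⱼ`, i.e.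
`t ∈ S` because `t ↦ e^{−2πit}` is injective on `[0, 1)`.
-/

noncomputable def circleNode (t : ℝ) : ℂ := Complex.exp (-(2 * π * Complex.I * t))

noncomputable def powVec (m : ℕ) (z : ℂ) : EuclideanSpace ℂ (Fin m) :=
  WithLp.toLp 2 fun k => z ^ (k : ℕ)

lemma circleNode_pow (n : ℕ) (t : ℝ) :
    circleNode t ^ n = Complex.exp (-(2 * π * Complex.I * n * t)) := by
  rw [circleNode, ← Complex.exp_nat_mul]
  ring_nf

lemma phiVec_eq_powVec (L : ℕ) (t : ℝ) : phiVec L t = powVec (L + 1) (circleNode t) := by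
  ext k
  exact (circleNode_pow k t).symm

lemma injOn_circleNode : Set.InjOn circleNode (Set.Ico 0 1) := by
  intro a ha b hb hab
  obtain ⟨n, hn⟩ := Complex.exp_eq_exp_iff_exists_int.1 hab
  have hab' : b - a = n := by
    have h2πI : 2 * π * Complex.I ≠ 0 := by simp [Real.pi_ne_zero, Complex.I_ne_zero]
    exact_mod_cast mul_left_cancel₀ h2πI (by linear_combination hn :
      2 * π * Complex.I * ((b : ℂ) - a) = 2 * π * Complex.I * n)
  have hn0 : n = 0 := by
    rw [← Int.abs_lt_one_iff, ← Int.cast_lt (R := ℝ), Int.cast_abs, Int.cast_one, ← hab',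
      abs_sub_lt_iff]
    constructor <;> linarith [ha.1, ha.2, hb.1, hb.2]
  rw [hn0, Int.cast_zero, sub_eq_zero] at hab'
  exact hab'.symm

lemma linearIndependent_powVec {m s : ℕ} (hsm : s ≤ m) {z : Fin s → ℂ}
    (hz : Function.Injective z) : LinearIndependent ℂ fun j => powVec m (z j) := by
  rw [Fintype.linearIndependent_iff]
  intro c hc
  refine congrFun (eq_zero_of_forall_pow_sum_mul_pow_eq_zero hz fun i => ?_)
  simpa [powVec] using congrArg (· (Fin.castLE hsm i)) hc

lemma powVec_mem_span_powVec_iff {m s : ℕ} (hsm : s < m) {z : Fin s → ℂ}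
    (hz : Function.Injective z) (w : ℂ) :
    powVec m w ∈ Submodule.span ℂ (Set.range fun j => powVec m (z j)) ↔ w ∈ Set.range z := by
  refine ⟨fun hw => ?_, fun ⟨j, hj⟩ => hj ▸ Submodule.subset_span ⟨j, rfl⟩⟩
  by_contra hwz
  have hcons : Function.Injective (Fin.cons w z : Fin (s + 1) → ℂ) :=
    Fin.cons_injective_iff.2 ⟨hwz, hz⟩
  have hli : LinearIndependent ℂ (Fin.cons (powVec m w) fun j => powVec m (z j)) := by
    convert linearIndependent_powVec hsm hcons using 1
    funext i
    cases i using Fin.cases <;> rfl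
  exact (linearIndependent_finCons.1 hli).2 hw

lemma exists_sum_pow_mul_eq {s n : ℕ} (hsn : s ≤ n) {z : Fin s → ℂ}
    (hz : Function.Injective z) (d : Fin s → ℂ) :
    ∃ v : Fin n → ℂ, ∀ j, ∑ l : Fin n, z j ^ (l : ℕ) * v l = d j := by
  -- pad a solution of the square Vandermonde system with zeros
  obtain ⟨r, rfl⟩ := Nat.exists_eq_add_of_le hsn
  obtain ⟨w, hw⟩ := mulVec_surjective_iff_isUnit.2
    ((isUnit_iff_isUnit_det _).2 (isUnit_iff_ne_zero.2 (det_vandermonde_ne_zero_iff.2 hz))) d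
  refine ⟨Fin.append w 0, fun j => ?_⟩
  simpa [Fin.sum_univ_add, mulVec, dotProduct, vandermonde] using congrFun hw j

lemma toEuclideanLin_hankel_apply {m n s : ℕ} {z x : Fin s → ℂ} {H : Matrix (Fin m) (Fin n) ℂ}
    (hH : ∀ k l, H k l = ∑ j, x j * z j ^ ((k : ℕ) + l)) (v : EuclideanSpace ℂ (Fin n)) :
    toEuclideanLin H v = ∑ j, (x j * ∑ l : Fin n, z j ^ (l : ℕ) * v l) • powVec m (z j) := by
  ext k
  simp only [toLpLin_apply, PiLp.toLp_apply, mulVec, dotProduct, hH, WithLp.ofLp_sum,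
    WithLp.ofLp_smul, Finset.sum_apply, Pi.smul_apply, powVec, smul_eq_mul, Finset.sum_mul,
    Finset.mul_sum, pow_add]
  rw [Finset.sum_comm]
  exact Finset.sum_congr rfl fun _ _ => Finset.sum_congr rfl fun _ _ => by ring

lemma range_toEuclideanLin_hankel {m n s : ℕ} (hsn : s ≤ n) {z x : Fin s → ℂ}
    (hz : Function.Injective z) (hx : ∀ j, x j ≠ 0) {H : Matrix (Fin m) (Fin n) ℂ}
    (hH : ∀ k l, H k l = ∑ j, x j * z j ^ ((k : ℕ) + l)) :
    LinearMap.range (toEuclideanLin H) = Submodule.span ℂ (Set.range fun j => powVec m (z j)) := by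
  refine le_antisymm ?_ (Submodule.span_le.2 ?_)
  · rintro _ ⟨v, rfl⟩
    rw [toEuclideanLin_hankel_apply hH]
    exact Submodule.sum_mem _ fun j _ => Submodule.smul_mem _ _ (Submodule.subset_span ⟨j, rfl⟩)
  · rintro _ ⟨j, rfl⟩
    obtain ⟨v, hv⟩ := exists_sum_pow_mul_eq hsn hz (Pi.single j (x j)⁻¹)
    refine ⟨WithLp.toLp 2 v, ?_⟩
    rw [toEuclideanLin_hankel_apply hH, Finset.sum_eq_single j]
    · simp [hv, hx j]
    · intro i _ hij
      simp [hv, hij]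
    · simp

lemma norm_orthogonalProjectionOnto_orthogonal_eq_zero_iff {𝕜 E : Type*} [RCLike 𝕜]
    [NormedAddCommGroup E] [InnerProductSpace 𝕜 E] (K : Submodule 𝕜 E)
    [K.HasOrthogonalProjection] (v : E) :
    ‖(Kᗮ.orthogonalProjectionOnto v : E)‖ = 0 ↔ v ∈ K := by
  rw [norm_eq_zero, ZeroMemClass.coe_eq_zero, Submodule.orthogonalProjectionOnto_eq_zero_iff,
    Submodule.orthogonal_orthogonal]

theorem stmt0_general (s L M : ℕ)
    (hLs : s ≤ L) (hMs : s ≤ M - L + 1)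
    (ω : Fin s → ℝ) (hdist : Function.Injective ω)
    (hω : ∀ j, ω j ∈ Set.Ico (0 : ℝ) 1)
    (x : Fin s → ℂ) (hx : ∀ j, x j ≠ 0)
    (y : ℕ → ℂ)
    (hy : ∀ k : ℕ, y k = ∑ j, x j *
      Complex.exp (-(2 * Real.pi * Complex.I * (k : ℂ) * (ω j : ℂ))))
    (H : Matrix (Fin (L + 1)) (Fin (M - L + 1)) ℂ)
    (hH : ∀ (k : Fin (L + 1)) (l : Fin (M - L + 1)), H k l = y ((k : ℕ) + (l : ℕ)))
    (R : ℝ → ℝ)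
    (hR : ∀ t, R t =
      ‖(Submodule.orthogonalProjection (LinearMap.range (Matrix.toEuclideanLin H))ᗮ (phiVec L t) :
        EuclideanSpace ℂ (Fin (L + 1)))‖ / ‖phiVec L t‖) :
    ∀ t ∈ Set.Ico (0 : ℝ) 1, (∃ j, t = ω j) ↔ R t = 0 := by
  intro t ht
  set z := fun j => circleNode (ω j)
  have hz : Function.Injective z := fun a b hab => hdist (injOn_circleNode (hω a) (hω b) hab)
  have hHz : ∀ k l, H k l = ∑ j, x j * z j ^ ((k : ℕ) + l) := fun k l => by
    simp only [hH, hy, z, circleNode_pow, Nat.cast_add]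
  have hφ : ‖phiVec L t‖ ≠ 0 := by
    rw [norm_ne_zero_iff, phiVec_eq_powVec]
    intro h0
    simpa [powVec] using congrArg (· 0) h0
  rw [hR, div_eq_zero_iff, or_iff_left hφ, norm_orthogonalProjectionOnto_orthogonal_eq_zero_iff,
    range_toEuclideanLin_hankel hMs hz hx hHz, phiVec_eq_powVec,
    powVec_mem_span_powVec_iff (by omega) hz]
  exact ⟨fun ⟨j, hj⟩ => ⟨j, by rw [hj]⟩, fun ⟨j, hj⟩ => ⟨j, injOn_circleNode ht (hω j) hj.symm⟩⟩

theorem stmt0 (s L M : ℕ) (hs : 1 ≤ s) (hL : 1 ≤ L) (hLM : L < M)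
    (hLs : s ≤ L) (hMs : s ≤ M - L + 1)
    (ω : Fin s → ℝ) (hdist : Function.Injective ω)
    (hω : ∀ j, ω j ∈ Set.Ico (0 : ℝ) 1)
    (x : Fin s → ℂ) (hx : ∀ j, x j ≠ 0)
    (y : ℕ → ℂ)
    (hy : ∀ k : ℕ, y k = ∑ j, x j *
      Complex.exp (-(2 * Real.pi * Complex.I * (k : ℂ) * (ω j : ℂ))))
    (H : Matrix (Fin (L + 1)) (Fin (M - L + 1)) ℂ)
    (hH : ∀ (k : Fin (L + 1)) (l : Fin (M - L + 1)), H k l = y ((k : ℕ) + (l : ℕ)))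
    (R : ℝ → ℝ)
    (hR : ∀ t, R t =
      ‖(Submodule.orthogonalProjection (LinearMap.range (Matrix.toEuclideanLin H))ᗮ (phiVec L t) :
        EuclideanSpace ℂ (Fin (L + 1)))‖ / ‖phiVec L t‖) :
    ∀ t ∈ Set.Ico (0 : ℝ) 1, (∃ j, t = ω j) ↔ R t = 0 :=
  stmt0_general s L M hLs hMs ω hdist hω x hx y hy H hH R hR
end

section
/- (Poisson summation identity for the cosine window.) Let L ≥ 1 be an integer and g(t) = cos(π(t − 1/2)). Then for every ω ∈ ℝ such that 4L²(ω − r)² ≠ 1 for all r ∈ ℤ, (1/L)·Σ_{k=0}^{L} g(k/L) e^{2πi k ω} = (2/π)·Σ_{r∈ℤ} [cos(πL(ω − r)) / (1 − 4L²(ω − r)²)]·e^{iπL(ω − r)}, where the series on the right converges absolutely. -/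
open scoped Real
open Finset

/-- The summand of the bilateral Poisson series:
`(cos(πL(ω − r)) / (1 − 4L²(ω − r)²)) · e^{iπL(ω − r)}`. -/
noncomputable def poissonTerm (L : ℕ) (ω : ℝ) (r : ℤ) : ℂ :=
  ((Real.cos (Real.pi * L * (ω - r)) / (1 - 4 * (L : ℝ) ^ 2 * (ω - r) ^ 2) : ℝ) : ℂ) *
    Complex.exp (Complex.I * Real.pi * L * ((ω : ℂ) - (r : ℂ)))

/-!
Poisson summation applied to `F(t) = sin(πt/L) e^{2πiωt}` on `[0, L]`, extended by zero:
its integer samples are the left-hand sum because `cos(π(x − 1/2)) = sin(πx)`, and it is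
continuous because the sine vanishes at both ends. With `a = π/L` and `b = 2π(ω − ξ)`, the
relation `aL = π` gives `𝓕F(ξ) = ∫₀ᴸ sin(at) e^{ibt} dt = a(1 + e^{ibL})/(a² − b²)`, and
`1 + e^{2ix} = 2 cos x e^{ix}` identifies this with `2L/π` times the summand at `r = ξ`. The
summands are `O(r⁻²)`, so the Fourier side of Poisson's formula is summable.
-/

open scoped FourierTransform
open Filter Real

theorem summable_inv_abs_one_sub_mul_sq {c : ℝ} (hc : 0 < c) (ω : ℝ) :
    Summable fun r : ℤ => |1 - c * (ω - r) ^ 2|⁻¹ := by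
  have hmajor : Summable fun r : ℤ => 2 / c * (1 / |r + -ω| ^ (2 : ℝ)) :=
    ((summable_one_div_int_add_rpow (-ω) 2).mpr one_lt_two).mul_left _
  have hfar : ∀ᶠ r : ℤ in cofinite, 2 / c ≤ ‖(r : ℝ) - ω‖ ^ 2 :=
    (((tendsto_pow_atTop two_ne_zero).comp tendsto_norm_cocompact_atTop).comp
      ((Homeomorph.subRight ω).isClosedEmbedding.tendsto_cocompact.comp
        Int.tendsto_coe_cofinite)).eventually_ge_atTop _
  refine hmajor.of_norm_bounded_eventually ?_
  filter_upwards [hfar] with r hr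
  rw [norm_eq_abs, sq_abs, show ((r : ℝ) - ω) ^ 2 = (ω - r) ^ 2 by ring] at hr
  rw [norm_eq_abs, abs_inv, abs_abs, rpow_two, sq_abs,
    show ((r : ℝ) + -ω) ^ 2 = (ω - r) ^ 2 by ring]
  have hcs : 2 ≤ c * (ω - r) ^ 2 := by rwa [div_le_iff₀' hc] at hr
  have hs : 0 < (ω - r) ^ 2 := by nlinarith
  calc |1 - c * (ω - r) ^ 2|⁻¹ ≤ (c * (ω - r) ^ 2 / 2)⁻¹ :=
        inv_anti₀ (by positivity) (by rw [abs_of_neg (by linarith)]; linarith)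
    _ = 2 / c * (1 / (ω - r) ^ 2) := by field_simp

theorem norm_poissonTerm_le (L : ℕ) (ω : ℝ) (r : ℤ) :
    ‖poissonTerm L ω r‖ ≤ |1 - 4 * (L : ℝ) ^ 2 * (ω - r) ^ 2|⁻¹ := by
  have hphase :
      Complex.I * π * L * ((ω : ℂ) - r) = ((π * L * (ω - r) : ℝ) : ℂ) * Complex.I := by
    push_cast; ring
  rw [poissonTerm, norm_mul, hphase, Complex.norm_exp_ofReal_mul_I, mul_one, Complex.norm_real,
    norm_eq_abs, abs_div, ← one_div]
  exact div_le_div_of_nonneg_right (abs_cos_le_one _) (abs_nonneg _)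

theorem summable_norm_poissonTerm {L : ℕ} (hL : 1 ≤ L) (ω : ℝ) :
    Summable fun r : ℤ => ‖poissonTerm L ω r‖ :=
  (summable_inv_abs_one_sub_mul_sq (by positivity) ω).of_nonneg_of_le (fun _ => norm_nonneg _)
    (norm_poissonTerm_le L ω)

theorem tsum_indicator_Icc_intCast {M : Type*} [AddCommMonoid M] [TopologicalSpace M]
    (f : ℝ → M) (L : ℕ) :
    ∑' n : ℤ, Set.indicator (Set.Icc (0 : ℝ) L) f n = ∑ k ∈ range (L + 1), f k := by
  rw [tsum_eq_sum (s := (range (L + 1)).map Nat.castEmbedding), sum_map]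
  · refine sum_congr rfl fun k hk => Set.indicator_of_mem ?_ f
    simp only [Nat.castEmbedding_apply, Int.cast_natCast, Set.mem_Icc, Nat.cast_nonneg, true_and]
    exact_mod_cast Nat.lt_succ_iff.mp (mem_range.mp hk)
  · intro n hn
    refine Set.indicator_of_notMem (fun hmem => hn ?_) f
    obtain ⟨h0, hL⟩ := Set.mem_Icc.mp hmem
    have h0' : 0 ≤ n := by exact_mod_cast h0
    have hL' : n ≤ L := by exact_mod_cast hL
    simp only [Finset.mem_map, mem_range, Nat.castEmbedding_apply]
    exact ⟨n.toNat, by omega, by omega⟩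

theorem HasCompactSupport.isBigO_cocompact {α E F : Type*} [TopologicalSpace α]
    [NormedAddCommGroup E] [Norm F] {f : α → E} (hf : HasCompactSupport f) (g : α → F) :
    f =O[cocompact α] g :=
  ((hasCompactSupport_iff_eventuallyEq.mp hf).filter_mono
    cocompact_le_coclosedCompact).trans_isBigO (Asymptotics.isBigO_zero g _)

open Complex in
theorem integral_sin_mul_exp {a b : ℂ} (hab : a ^ 2 ≠ b ^ 2) (T : ℝ) :
    ∫ t in (0 : ℝ)..T, sin (a * t) * exp (b * t * I) =
      (a + exp (b * T * I) * (b * I * sin (a * T) - a * cos (a * T))) / (a ^ 2 - b ^ 2) := by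
  have hderiv (z : ℂ) : HasDerivAt
      (fun z => exp (b * z * I) * (b * I * sin (a * z) - a * cos (a * z)) / (a ^ 2 - b ^ 2))
      (sin (a * z) * exp (b * z * I)) z := by
    have hlin (c : ℂ) : HasDerivAt (fun z => c * z) c z := by
      simpa using (hasDerivAt_id z).const_mul c
    refine ((((hasDerivAt_id z).const_mul b).mul_const I).cexp.mul
      (((hlin a).csin.const_mul (b * I)).sub ((hlin a).ccos.const_mul a))).div_const
      (a ^ 2 - b ^ 2) |>.congr_deriv ?_
    rw [div_eq_iff (sub_ne_zero.mpr hab)]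
    simp only [id, Pi.sub_apply]
    linear_combination (b ^ 2 * sin (a * z) * exp (b * z * I)) * I_sq
  rw [intervalIntegral.integral_eq_sub_of_hasDerivAt (fun t _ => (hderiv t).comp_ofReal)
    (by apply Continuous.intervalIntegrable; fun_prop)]
  simp only [ofReal_zero, mul_zero, zero_mul, Complex.exp_zero, Complex.sin_zero,
    Complex.cos_zero]
  ring

open Complex in
theorem integral_sin_mul_exp_of_mul_eq_pi {a b : ℂ} (hab : a ^ 2 ≠ b ^ 2) {T : ℝ}
    (haT : a * T = π) :
    ∫ t in (0 : ℝ)..T, sin (a * t) * exp (b * t * I) =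
      a * (1 + exp (b * T * I)) / (a ^ 2 - b ^ 2) := by
  rw [integral_sin_mul_exp hab, haT, Complex.sin_pi, Complex.cos_pi]
  ring

theorem Complex.one_add_exp_two_mul_I (x : ℂ) :
    1 + exp (2 * x * I) = 2 * cos x * exp (x * I) := by
  rw [two_cos, add_mul, ← exp_add, ← exp_add]
  ring_nf
  simp [add_comm]

noncomputable def sineWindow (T ω : ℝ) : ℝ → ℂ :=
  Set.indicator (Set.Icc 0 T) fun t =>
    (Real.sin (π * t / T) : ℂ) * Complex.exp (2 * π * Complex.I * t * ω)

theorem hasCompactSupport_sineWindow (T ω : ℝ) : HasCompactSupport (sineWindow T ω) :=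
  HasCompactSupport.intro isCompact_Icc fun _ ht => Set.indicator_of_notMem ht _

theorem continuous_sineWindow (T ω : ℝ) : Continuous (sineWindow T ω) := by
  classical
  rw [sineWindow, ← Set.piecewise_eq_indicator]
  refine continuous_piecewise ?_ (by fun_prop) continuousOn_const
  rw [frontier, closure_Icc, interior_Icc]
  rintro t ⟨⟨h0, hT⟩, hIoo⟩
  obtain rfl | rfl : t = 0 ∨ t = T := by
    by_contra! h
    exact hIoo ⟨lt_of_le_of_ne h0 (Ne.symm h.1), lt_of_le_of_ne hT h.2⟩
  · simp
  · rcases eq_or_ne t 0 with rfl | ht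
    · simp
    · simp [mul_div_assoc, div_self ht]

theorem fourier_sineWindow_eq_intervalIntegral {T : ℝ} (hT : 0 ≤ T) (ω ξ : ℝ) :
    𝓕 (sineWindow T ω) ξ = ∫ t in (0 : ℝ)..T,
      Complex.sin (π / T * t) * Complex.exp (2 * π * (ω - ξ) * t * Complex.I) := by
  simp_rw [fourier_real_eq_integral_exp_smul, sineWindow,
    ← Set.indicator_smul_apply _ fun v : ℝ => Complex.exp (↑(-2 * π * v * ξ) * Complex.I)]
  rw [MeasureTheory.integral_indicator measurableSet_Icc,
    MeasureTheory.integral_Icc_eq_integral_Ioc, ← intervalIntegral.integral_of_le hT]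
  refine intervalIntegral.integral_congr fun t _ => ?_
  simp only [smul_eq_mul]
  push_cast
  rw [mul_left_comm, ← Complex.exp_add]
  ring_nf

theorem fourier_sineWindow {T : ℝ} (hT : 0 < T) (ω ξ : ℝ)
    (h : 4 * T ^ 2 * (ω - ξ) ^ 2 ≠ 1) :
    𝓕 (sineWindow T ω) ξ = 2 * T / π *
      ((Real.cos (π * T * (ω - ξ)) / (1 - 4 * T ^ 2 * (ω - ξ) ^ 2) : ℝ) : ℂ) *
        Complex.exp (Complex.I * π * T * (ω - ξ)) := by
  set a : ℂ := π / T
  set b : ℂ := 2 * π * (ω - ξ)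
  have hT' : (T : ℂ) ≠ 0 := by exact_mod_cast hT.ne'
  have hπ : (π : ℂ) ≠ 0 := by exact_mod_cast pi_ne_zero
  have hden : (1 - 4 * T ^ 2 * (ω - ξ) ^ 2 : ℂ) ≠ 0 := by
    rw [sub_ne_zero]; exact_mod_cast h.symm
  have hab : a ^ 2 - b ^ 2 = (π / T) ^ 2 * (1 - 4 * T ^ 2 * (ω - ξ) ^ 2) := by
    simp only [a, b]; field_simp; ring
  have hab' : a ^ 2 ≠ b ^ 2 := by
    rw [← sub_ne_zero, hab]; exact mul_ne_zero (by simp [hπ, hT']) hden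
  set x : ℂ := π * T * (ω - ξ)
  have haT : a * T = π := by simp only [a]; field_simp
  have hbT : b * T = 2 * x := by simp only [b, x]; ring
  rw [fourier_sineWindow_eq_intervalIntegral hT.le, integral_sin_mul_exp_of_mul_eq_pi hab' haT,
    hbT, Complex.one_add_exp_two_mul_I, hab,
    show Complex.I * π * T * (ω - ξ) = x * Complex.I by ring]
  push_cast
  simp only [a, x]
  field_simp

theorem stmt9 (L : ℕ) (hL : 1 ≤ L) (ω : ℝ)
    (hω : ∀ r : ℤ, 4 * (L : ℝ) ^ 2 * (ω - r) ^ 2 ≠ 1) :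
    Summable (fun r : ℤ => ‖poissonTerm L ω r‖) ∧
    (1 / (L : ℂ)) * ∑ k ∈ Finset.range (L + 1),
        (Real.cos (Real.pi * ((k : ℝ) / L - 1 / 2)) : ℂ) *
          Complex.exp (2 * Real.pi * Complex.I * (k : ℂ) * (ω : ℂ)) =
      (2 / (Real.pi : ℂ)) * ∑' r : ℤ, poissonTerm L ω r := by
  have hsum := summable_norm_poissonTerm hL ω
  refine ⟨hsum, ?_⟩
  have hF (n : ℤ) : 𝓕 (sineWindow L ω) n = 2 * L / π * poissonTerm L ω n := by
    rw [fourier_sineWindow (by exact_mod_cast hL) ω n (hω n), poissonTerm]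
    push_cast; ring
  have hpoisson := tsum_eq_tsum_fourier_of_rpow_decay_of_summable (continuous_sineWindow L ω)
    one_lt_two ((hasCompactSupport_sineWindow L ω).isBigO_cocompact _)
    (by simp_rw [hF]; exact hsum.of_norm.mul_left _) 0
  simp only [zero_add, hF, fourier_coe_apply, Complex.ofReal_zero, mul_zero, zero_div,
    Complex.exp_zero, mul_one, tsum_mul_left] at hpoisson
  rw [sineWindow, tsum_indicator_Icc_intCast] at hpoisson
  have hsample (k : ℕ) : Real.cos (π * ((k : ℝ) / L - 1 / 2)) = Real.sin (π * k / L) := by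
    rw [← cos_sub_pi_div_two]; ring_nf
  simp_rw [hsample]
  simp only [Complex.ofReal_natCast] at hpoisson
  have hL0 : (L : ℂ) ≠ 0 := Nat.cast_ne_zero.mpr (by omega)
  rw [hpoisson]
  field_simp
end

section
/- Let S = {ω_1,…,ω_s} ⊂ [0,1) be pairwise distinct, x_1,…,x_s nonzero, L ≥ s, M − L + 1 ≥ s, and H = Φ^L X (Φ^{M−L})^T with X = diag(x_1,…,x_s). Let H^ε = H + E with ‖E‖_2 < σ_s (σ_s the smallest nonzero singular value of H). Then for each j = 1,…,s, R^ε(ω_j) ≤ 2‖E‖_2 / (x_min · σ_min((Φ^{M−L})^T) · ‖φ^L(ω_j)‖_2), where x_min = min_j |x_j| and σ_min((Φ^{M−L})^T) is the smallest nonzero singular value of (Φ^{M−L})^T. -/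
open scoped Real
open Matrix Finset

/-- The `(L+1) × s` Vandermonde matrix with columns `φ^L(ω_j)`. -/
noncomputable def vand (L s : ℕ) (ω : Fin s → ℝ) : Matrix (Fin (L + 1)) (Fin s) ℂ :=
  Matrix.of fun k j =>
    Complex.exp (-(2 * Real.pi * Complex.I * ((k : ℕ) : ℂ) * (ω j : ℂ)))

/-- The spectral norm (largest singular value) of a matrix: the `ℓ² → ℓ²` operator norm. -/
noncomputable def mopNorm {m n : Type*} [Fintype m] [Fintype n] [DecidableEq n]
    (A : Matrix m n ℂ) : ℝ :=
  ‖LinearMap.toContinuousLinearMap (Matrix.toEuclideanLin A)‖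

/-- The smallest nonzero singular value of a matrix: the infimum of `‖A v‖` over unit
vectors `v` orthogonal to the kernel of `A`. -/
noncomputable def sigmaMinNZ {m n : Type*} [Fintype m] [Fintype n] [DecidableEq n]
    (A : Matrix m n ℂ) : ℝ :=
  sInf {r | ∃ v : EuclideanSpace ℂ n,
    v ∈ (LinearMap.ker (Matrix.toEuclideanLin A))ᗮ ∧ ‖v‖ = 1 ∧
      r = ‖Matrix.toEuclideanLin A v‖}

/-- The rectangular "diagonal" matrix with diagonal entries `σ 0, σ 1, …`. -/
noncomputable def svdDiag (m n : ℕ) (σ : ℕ → ℝ) : Matrix (Fin m) (Fin n) ℂ :=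
  Matrix.of fun k l => if (k : ℕ) = (l : ℕ) then ((σ (k : ℕ) : ℝ) : ℂ) else 0

/-!
Write `H + E = Uε Σ Vεᴴ`. Compressed by `P₂ε`, only the singular values `σ_i` with `i ≥ s`
survive, and these are at most `‖E‖` by Weyl's inequality, because `H` has rank at most `s`.
Hence `‖P₂ε H‖ ≤ ‖P₂ε (H + E)‖ + ‖P₂ε E‖ ≤ 2 ‖E‖`. The matrix `Ψ = (Φ^{M-L})ᵀ` contains an
invertible Vandermonde block, so there is `w ⊥ ker Ψ` with `Ψ w = e_j`; then
`σ_min(Ψ) ‖w‖ ≤ 1` and `H w = x_j φ^L(ω_j)`, so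
`|x_j| ‖P₂ε φ^L(ω_j)‖ = ‖P₂ε H w‖ ≤ 2 ‖E‖ / σ_min(Ψ)`.
-/

-- `mopNorm A` unfolds to the norm `‖A‖` of this instance.
open scoped Matrix.Norms.L2Operator

namespace Matrix

variable {𝕜 : Type*} [RCLike 𝕜] {m n : Type*} [Fintype m] [Fintype n] [DecidableEq n]

lemma norm_toEuclideanLin_apply_le (A : Matrix m n 𝕜) (v : EuclideanSpace 𝕜 n) :
    ‖toEuclideanLin A v‖ ≤ ‖A‖ * ‖v‖ :=
  (LinearMap.toContinuousLinearMap (toEuclideanLin A)).le_opNorm v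

lemma l2_opNorm_le_of_forall (A : Matrix m n 𝕜) {c : ℝ} (hc : 0 ≤ c)
    (h : ∀ v, ‖toEuclideanLin A v‖ ≤ c * ‖v‖) : ‖A‖ ≤ c :=
  ContinuousLinearMap.opNorm_le_bound _ hc h

lemma norm_toEuclideanLin_of_mem_unitaryGroup {U : Matrix n n 𝕜}
    (hU : U ∈ unitaryGroup n 𝕜) (v : EuclideanSpace 𝕜 n) : ‖toEuclideanLin U v‖ = ‖v‖ :=
  have h : toEuclideanCLM (n := n) (𝕜 := 𝕜) U ∈ unitary _ := Unitary.map_mem _ hU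
  ContinuousLinearMap.norm_map_of_mem_unitary h v

lemma l2_opNorm_le_one_of_mem_unitaryGroup {U : Matrix n n 𝕜}
    (hU : U ∈ unitaryGroup n 𝕜) : ‖U‖ ≤ 1 :=
  l2_opNorm_le_of_forall U zero_le_one fun v => by
    rw [norm_toEuclideanLin_of_mem_unitaryGroup hU, one_mul]

lemma l2_opNorm_mul_mul_conjTranspose_le [DecidableEq m] {U : Matrix m m 𝕜}
    {V : Matrix n n 𝕜} (hU : U ∈ unitaryGroup m 𝕜) (hV : V ∈ unitaryGroup n 𝕜)
    (A : Matrix m n 𝕜) : ‖U * A * Vᴴ‖ ≤ ‖A‖ :=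
  calc ‖U * A * Vᴴ‖ ≤ ‖U‖ * ‖A‖ * ‖V‖ := by
        grw [l2_opNorm_mul, l2_opNorm_mul, l2_opNorm_conjTranspose]
    _ ≤ 1 * ‖A‖ * 1 := by
        gcongr
        exacts [l2_opNorm_le_one_of_mem_unitaryGroup hU, l2_opNorm_le_one_of_mem_unitaryGroup hV]
    _ = ‖A‖ := by ring

lemma toEuclideanLin_mul_apply {l : Type*} [DecidableEq m] (A : Matrix l m 𝕜)
    (B : Matrix m n 𝕜) (v : EuclideanSpace 𝕜 n) :
    toEuclideanLin (A * B) v = toEuclideanLin A (toEuclideanLin B v) := by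
  simp

lemma rank_eq_finrank_range_toEuclideanLin (A : Matrix m n 𝕜) :
    A.rank = Module.finrank 𝕜 (LinearMap.range (toEuclideanLin A)) := by
  rw [rank_eq_finrank_range_toLin A (PiLp.basisFun 2 𝕜 m) (PiLp.basisFun 2 𝕜 n),
    ← toLpLin_eq_toLin]

lemma finrank_ker_toEuclideanLin_add_rank (B : Matrix m n 𝕜) :
    Module.finrank 𝕜 (LinearMap.ker (toEuclideanLin B)) + B.rank = Fintype.card n := by
  rw [rank_eq_finrank_range_toEuclideanLin, add_comm, LinearMap.finrank_range_add_finrank_ker,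
    finrank_euclideanSpace]

lemma toEuclideanLin_surjective_of_apply_eq_pow {s n : ℕ} {z : Fin s → 𝕜}
    (hz : Function.Injective z) (hsn : s ≤ n) {A : Matrix (Fin s) (Fin n) 𝕜}
    (hA : ∀ j k, A j k = z j ^ (k : ℕ)) : Function.Surjective (toEuclideanLin A) := by
  have hsub : A.submatrix id (Fin.castLE hsn) = vandermonde z := by
    ext j k
    simp [hA, vandermonde_apply]
  have hrank : s ≤ A.rank :=
    calc s = (vandermonde z).rank := by
          rw [rank_of_isUnit _ ((isUnit_iff_isUnit_det _).mpr
            (isUnit_iff_ne_zero.mpr (det_vandermonde_ne_zero_iff.mpr hz))),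
            Fintype.card_fin]
      _ ≤ A.rank := hsub ▸ rank_submatrix_le _ _ _
  rw [← LinearMap.range_eq_top]
  refine Submodule.eq_top_of_finrank_eq (le_antisymm (Submodule.finrank_le _) ?_)
  rwa [finrank_euclideanSpace_fin, ← rank_eq_finrank_range_toEuclideanLin]

end Matrix

lemma Fin.sum_ite_val_eq {M : Type*} [AddCommMonoid M] {n : ℕ} (k : ℕ) (f : Fin n → M) :
    ∑ l : Fin n, (if k = (l : ℕ) then f l else 0) = if h : k < n then f ⟨k, h⟩ else 0 := by
  split_ifs with h
  · rw [Finset.sum_eq_single ⟨k, h⟩ (fun l _ hl => if_neg fun he => hl (Fin.ext he.symm))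
      (by simp), if_pos rfl]
  · exact Finset.sum_eq_zero fun l _ => if_neg fun (he : k = l) => h (he ▸ l.isLt)

section svdDiag

variable {m n : ℕ} (σ : ℕ → ℝ)

lemma norm_toEuclideanLin_svdDiag_sq (v : EuclideanSpace ℂ (Fin n)) :
    ‖Matrix.toEuclideanLin (svdDiag m n σ) v‖ ^ 2 =
      ∑ i : Fin n, if (i : ℕ) < m then σ i ^ 2 * ‖v i‖ ^ 2 else 0 := by
  have hrow (k : Fin m) : ‖Matrix.toEuclideanLin (svdDiag m n σ) v k‖ ^ 2 =
      ∑ l : Fin n, if (k : ℕ) = l then σ l ^ 2 * ‖v l‖ ^ 2 else 0 := by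
    have hk : Matrix.toEuclideanLin (svdDiag m n σ) v k =
        ∑ l : Fin n, if (k : ℕ) = l then (σ l : ℂ) * v l else 0 := by
      change (svdDiag m n σ *ᵥ v.ofLp) k = _
      simp only [Matrix.mulVec, dotProduct, svdDiag, Matrix.of_apply]
      refine Finset.sum_congr rfl fun l _ => ?_
      split_ifs with hkl <;> simp [hkl]
    rw [hk, Fin.sum_ite_val_eq, Fin.sum_ite_val_eq]
    split_ifs <;> simp [mul_pow]
  rw [EuclideanSpace.norm_sq_eq, Finset.sum_congr rfl fun k _ => hrow k, Finset.sum_comm]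
  refine Finset.sum_congr rfl fun l _ => ?_
  simp_rw [eq_comm (a := ((_ : Fin m) : ℕ))]
  rw [Fin.sum_ite_val_eq]
  rfl

lemma l2_opNorm_svdDiag_le {c : ℝ} (hc : 0 ≤ c) (h : ∀ i, i < m → i < n → |σ i| ≤ c) :
    ‖svdDiag m n σ‖ ≤ c := by
  refine Matrix.l2_opNorm_le_of_forall _ hc fun v => ?_
  rw [← pow_le_pow_iff_left₀ (norm_nonneg _) (by positivity) two_ne_zero,
    norm_toEuclideanLin_svdDiag_sq, mul_pow, EuclideanSpace.norm_sq_eq, Finset.mul_sum]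
  gcongr with i
  split_ifs with hi
  · gcongr ?_ * _
    rw [← sq_abs]
    gcongr
    exact h i hi i.isLt
  · positivity

lemma mul_norm_le_norm_toEuclideanLin_svdDiag (hσ : Antitone σ) {s : ℕ} (hσs : 0 ≤ σ s)
    (hsm : s < m) {w : EuclideanSpace ℂ (Fin n)} (hw : ∀ i : Fin n, s < i → w i = 0) :
    σ s * ‖w‖ ≤ ‖Matrix.toEuclideanLin (svdDiag m n σ) w‖ := by
  rw [← pow_le_pow_iff_left₀ (by positivity) (norm_nonneg _) two_ne_zero,
    norm_toEuclideanLin_svdDiag_sq, mul_pow, EuclideanSpace.norm_sq_eq, Finset.mul_sum]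
  gcongr with i
  by_cases hi : (i : ℕ) ≤ s
  · rw [if_pos (by omega)]
    gcongr
    exact hσ hi
  · simp [hw i (by omega)]

lemma diagonal_mul_svdDiag (s : ℕ) :
    Matrix.diagonal (fun i : Fin m => if (i : ℕ) < s then (0 : ℂ) else 1) * svdDiag m n σ =
      svdDiag m n (fun i => if i < s then 0 else σ i) := by
  ext k l
  simp only [Matrix.diagonal_mul, svdDiag, Matrix.of_apply]
  split_ifs <;> simp

end svdDiag

lemma LinearMap.exists_mem_orthogonal_ker_apply_eq {𝕜 E F : Type*} [RCLike 𝕜]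
    [NormedAddCommGroup E] [InnerProductSpace 𝕜 E] [FiniteDimensional 𝕜 E] [AddCommGroup F]
    [Module 𝕜 F] (f : E →ₗ[𝕜] F) {y : F} (hy : y ∈ LinearMap.range f) :
    ∃ w ∈ (LinearMap.ker f)ᗮ, f w = y := by
  obtain ⟨v, rfl⟩ := hy
  set K := (LinearMap.ker f)ᗮ
  have hvw : v - K.starProjection v ∈ LinearMap.ker f := by
    simpa only [K, Submodule.orthogonal_orthogonal] using K.sub_starProjection_mem_orthogonal v
  rw [LinearMap.mem_ker, map_sub, sub_eq_zero] at hvw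
  exact ⟨K.starProjection v, K.starProjection_apply_mem v, hvw.symm⟩


open Matrix in
/-- Weyl's inequality `σ_{s+1}(A) ≤ ‖A - B‖` for `rank B ≤ s`; singular values are indexed from
`0` here, so `σ_{s+1}` is `σ s`. -/
theorem le_l2_opNorm_sub_of_rank_le {m n s : ℕ} {A B : Matrix (Fin m) (Fin n) ℂ}
    {U : Matrix (Fin m) (Fin m) ℂ} {V : Matrix (Fin n) (Fin n) ℂ} {σ : ℕ → ℝ}
    (hU : U ∈ unitaryGroup (Fin m) ℂ) (hV : V ∈ unitaryGroup (Fin n) ℂ)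
    (hA : A = U * svdDiag m n σ * Vᴴ) (hσ : Antitone σ) (hσs : 0 ≤ σ s)
    (hsm : s < m) (hsn : s < n) (hB : B.rank ≤ s) : σ s ≤ ‖A - B‖ := by
  have hVH : Vᴴ ∈ unitaryGroup (Fin n) ℂ := Unitary.star_mem hV
  -- by a dimension count, some `u ≠ 0` in `ker B` has `Vᴴ u` supported on the first `s + 1`
  -- coordinates, where `Σ` stretches by at least `σ s`
  let tail : LinearMap.ker (toEuclideanLin B) →ₗ[ℂ] (Fin (n - (s + 1)) → ℂ) :=
    { toFun u t := toEuclideanLin Vᴴ u ⟨s + 1 + t, by omega⟩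
      map_add' _ _ := by ext; simp
      map_smul' _ _ := by ext; simp }
  have hdim : Module.finrank ℂ (Fin (n - (s + 1)) → ℂ) <
      Module.finrank ℂ (LinearMap.ker (toEuclideanLin B)) := by
    have := finrank_ker_toEuclideanLin_add_rank B
    simp only [Module.finrank_fin_fun, Fintype.card_fin] at this ⊢
    omega
  obtain ⟨⟨u, hBu⟩, hu, hu0⟩ :=
    Submodule.exists_mem_ne_zero_of_ne_bot (LinearMap.ker_ne_bot_of_finrank_lt (f := tail) hdim)
  have hupos : 0 < ‖u‖ := norm_pos_iff.mpr (by simpa using hu0)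
  have hw : ∀ i : Fin n, s < i → toEuclideanLin Vᴴ u i = 0 := fun i hi => by
    have hi' : i = ⟨s + 1 + (i - (s + 1)), by omega⟩ := Fin.ext (by simp only; omega)
    rw [hi']
    exact congrFun (LinearMap.mem_ker.mp hu) ⟨i - (s + 1), by omega⟩
  refine le_of_mul_le_mul_right ?_ hupos
  calc σ s * ‖u‖ = σ s * ‖toEuclideanLin Vᴴ u‖ := by
        rw [norm_toEuclideanLin_of_mem_unitaryGroup hVH]
    _ ≤ ‖toEuclideanLin (svdDiag m n σ) (toEuclideanLin Vᴴ u)‖ :=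
        mul_norm_le_norm_toEuclideanLin_svdDiag σ hσ hσs hsm hw
    _ = ‖toEuclideanLin (A - B) u‖ := by
        rw [map_sub, LinearMap.sub_apply, LinearMap.mem_ker.mp hBu, sub_zero, hA,
          toEuclideanLin_mul_apply, toEuclideanLin_mul_apply,
          norm_toEuclideanLin_of_mem_unitaryGroup hU]
    _ ≤ ‖A - B‖ * ‖u‖ := norm_toEuclideanLin_apply_le _ _

/-- The projection `P₂` of the paper: for unitary `U`, the orthogonal projection onto the span
of all but the first `s` columns of `U`. -/
noncomputable def tailProj {m : ℕ} (U : Matrix (Fin m) (Fin m) ℂ) (s : ℕ) :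
    Matrix (Fin m) (Fin m) ℂ :=
  U * Matrix.diagonal (fun i : Fin m => if (i : ℕ) < s then 0 else 1) * Uᴴ

section tailProj

open Matrix

variable {m n s : ℕ} {A B : Matrix (Fin m) (Fin n) ℂ} {U : Matrix (Fin m) (Fin m) ℂ}
  {V : Matrix (Fin n) (Fin n) ℂ} {σ : ℕ → ℝ}

lemma l2_opNorm_tailProj_le_one (hU : U ∈ unitaryGroup (Fin m) ℂ) : ‖tailProj U s‖ ≤ 1 := by
  refine (l2_opNorm_mul_mul_conjTranspose_le hU hU _).trans ?_
  rw [l2_opNorm_diagonal]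
  refine pi_norm_le_iff_of_nonneg zero_le_one |>.mpr fun i => ?_
  split_ifs <;> simp

lemma l2_opNorm_tailProj_mul_le (hU : U ∈ unitaryGroup (Fin m) ℂ)
    (hV : V ∈ unitaryGroup (Fin n) ℂ) (hA : A = U * svdDiag m n σ * Vᴴ) (hσ : Antitone σ)
    (hσ0 : ∀ i, 0 ≤ σ i) (hB : B.rank ≤ s) : ‖tailProj U s * A‖ ≤ ‖A - B‖ := by
  have hUU : Uᴴ * U = 1 := hU.1
  have hPA : tailProj U s * A = U * svdDiag m n (fun i => if i < s then 0 else σ i) * Vᴴ := by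
    rw [tailProj, hA, ← diagonal_mul_svdDiag]
    simp only [Matrix.mul_assoc]
    rw [← Matrix.mul_assoc Uᴴ U, hUU, Matrix.one_mul]
  rw [hPA]
  refine (l2_opNorm_mul_mul_conjTranspose_le hU hV _).trans
    (l2_opNorm_svdDiag_le _ (norm_nonneg _) fun i him hin => ?_)
  split_ifs with his
  · simp
  · rw [abs_of_nonneg (hσ0 i)]
    exact (hσ (not_lt.mp his)).trans
      (le_l2_opNorm_sub_of_rank_le hU hV hA hσ (hσ0 s) (by omega) (by omega) hB)

lemma l2_opNorm_tailProj_mul_le_two_mul (hU : U ∈ unitaryGroup (Fin m) ℂ)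
    (hV : V ∈ unitaryGroup (Fin n) ℂ) (hA : A = U * svdDiag m n σ * Vᴴ) (hσ : Antitone σ)
    (hσ0 : ∀ i, 0 ≤ σ i) (hB : B.rank ≤ s) : ‖tailProj U s * B‖ ≤ 2 * ‖A - B‖ :=
  calc ‖tailProj U s * B‖ = ‖tailProj U s * A - tailProj U s * (A - B)‖ := by
        rw [Matrix.mul_sub, sub_sub_cancel]
    _ ≤ ‖tailProj U s * A‖ + ‖tailProj U s‖ * ‖A - B‖ :=
        norm_sub_le_of_le le_rfl (l2_opNorm_mul _ _)
    _ ≤ ‖A - B‖ + 1 * ‖A - B‖ := by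
        gcongr
        exacts [l2_opNorm_tailProj_mul_le hU hV hA hσ hσ0 hB, l2_opNorm_tailProj_le_one hU]
    _ = 2 * ‖A - B‖ := by ring

end tailProj

section sigmaMinNZ

open Matrix

variable {m n : Type*} [Fintype m] [Fintype n] [DecidableEq n] {A : Matrix m n ℂ}

lemma sigmaMinNZ_nonneg (A : Matrix m n ℂ) : 0 ≤ sigmaMinNZ A :=
  Real.sInf_nonneg fun _ ⟨_, _, _, hr⟩ => hr ▸ norm_nonneg _

lemma sigmaMinNZ_mul_norm_le {v : EuclideanSpace ℂ n}
    (hv : v ∈ (LinearMap.ker (toEuclideanLin A))ᗮ) :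
    sigmaMinNZ A * ‖v‖ ≤ ‖toEuclideanLin A v‖ := by
  rcases eq_or_ne v 0 with rfl | hv0
  · simp
  have hpos : 0 < ‖v‖ := norm_pos_iff.mpr hv0
  have hle : sigmaMinNZ A ≤ ‖toEuclideanLin A ((‖v‖ : ℂ)⁻¹ • v)‖ :=
    csInf_le ⟨0, fun _ ⟨_, _, _, hr⟩ => hr ▸ norm_nonneg _⟩
      ⟨_, Submodule.smul_mem _ _ hv, by simp [norm_smul, hpos.ne'], rfl⟩
  rw [map_smul, norm_smul, norm_inv, Complex.norm_real, norm_norm, ← div_eq_inv_mul] at hle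
  exact (le_div_iff₀ hpos).mp hle

lemma sigmaMinNZ_pos (hA : A ≠ 0) : 0 < sigmaMinNZ A := by
  set K := (LinearMap.ker (toEuclideanLin A))ᗮ
  have hK : K ≠ ⊥ := by
    rw [Ne, Submodule.orthogonal_eq_bot_iff, LinearMap.ker_eq_top]
    exact fun h => hA (toEuclideanLin.map_eq_zero_iff.mp h)
  have hinj : LinearMap.ker (toEuclideanLin A ∘ₗ K.subtype) = ⊥ := by
    refine eq_bot_iff.mpr fun v hv => ?_
    exact Subtype.ext (inner_self_eq_zero.mp (Submodule.mem_orthogonal' _ _ |>.mp v.2 v hv))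
  obtain ⟨c, hc, hac⟩ := LinearMap.exists_antilipschitzWith _ hinj
  obtain ⟨v, hvK, hv0⟩ := Submodule.exists_mem_ne_zero_of_ne_bot hK
  have hc' : (0 : ℝ) < (c : ℝ)⁻¹ := inv_pos.mpr (by exact_mod_cast hc)
  refine hc'.trans_le (le_csInf ?_ ?_)
  · exact ⟨_, _, Submodule.smul_mem _ (‖v‖ : ℂ)⁻¹ hvK, by simp [norm_smul, hv0], rfl⟩
  rintro _ ⟨u, huK, hu1, rfl⟩
  have := hac.le_mul_dist ⟨u, huK⟩ 0
  rw [dist_zero_right, map_zero, dist_zero_right, Submodule.coe_norm, hu1] at this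
  rw [inv_le_iff_one_le_mul₀' (by exact_mod_cast hc)]
  exact this

end sigmaMinNZ

lemma injOn_exp_neg_two_pi_I_mul :
    Set.InjOn (fun t : ℝ => Complex.exp (-(2 * π * Complex.I * t))) (Set.Ico 0 1) := by
  intro a ha b hb hab
  have hexp : Circle.exp (-(2 * π * a)) = Circle.exp (-(2 * π * b)) := by
    ext
    simp only [Circle.coe_exp]
    convert hab using 2 <;> push_cast <;> ring
  have hmem (t : ℝ) (ht : t ∈ Set.Ico 0 1) : -(2 * π * t) ∈ Set.Ioc (-(2 * π)) 0 := by
    constructor <;> nlinarith [ht.1, ht.2, Real.pi_pos]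
  have := Circle.exp_injOn_Ioc (by linarith) (hmem a ha) (hmem b hb) hexp
  nlinarith [Real.pi_pos]

open Matrix in
lemma norm_mul_sigmaMinNZ_mul_norm_le {m s n : Type*} [Fintype m] [Fintype s] [Fintype n]
    [DecidableEq m] [DecidableEq s] [DecidableEq n] (P : Matrix m m ℂ) (Φ : Matrix m s ℂ)
    (x : s → ℂ) {Ψ : Matrix s n ℂ} (hΨ : Function.Surjective (toEuclideanLin Ψ)) (j : s) :
    ‖x j‖ * sigmaMinNZ Ψ * ‖toEuclideanLin P (WithLp.toLp 2 fun k => Φ k j)‖ ≤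
      ‖P * (Φ * diagonal x * Ψ)‖ := by
  obtain ⟨w, hwK, hw⟩ := LinearMap.exists_mem_orthogonal_ker_apply_eq (toEuclideanLin Ψ)
    (LinearMap.mem_range.mpr (hΨ (EuclideanSpace.single j 1)))
  have hσw : sigmaMinNZ Ψ * ‖w‖ ≤ 1 := by
    simpa [hw] using sigmaMinNZ_mul_norm_le hwK
  have hcol : toEuclideanLin (Φ * diagonal x) (EuclideanSpace.single j 1) =
      x j • WithLp.toLp 2 fun k => Φ k j := by
    ext k
    simp [mul_comm]
  have hPHw : toEuclideanLin (P * (Φ * diagonal x * Ψ)) w =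
      x j • toEuclideanLin P (WithLp.toLp 2 fun k => Φ k j) := by
    rw [toEuclideanLin_mul_apply, toEuclideanLin_mul_apply, hw, hcol, map_smul]
  calc ‖x j‖ * sigmaMinNZ Ψ * ‖toEuclideanLin P (WithLp.toLp 2 fun k => Φ k j)‖
      = sigmaMinNZ Ψ * ‖toEuclideanLin (P * (Φ * diagonal x * Ψ)) w‖ := by
        rw [hPHw, norm_smul]
        ring
    _ ≤ sigmaMinNZ Ψ * (‖P * (Φ * diagonal x * Ψ)‖ * ‖w‖) :=
        mul_le_mul_of_nonneg_left (norm_toEuclideanLin_apply_le _ _) (sigmaMinNZ_nonneg Ψ)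
    _ = ‖P * (Φ * diagonal x * Ψ)‖ * (sigmaMinNZ Ψ * ‖w‖) := by ring
    _ ≤ ‖P * (Φ * diagonal x * Ψ)‖ := mul_le_of_le_one_right (norm_nonneg _) hσw

lemma vand_transpose_apply (L s : ℕ) (ω : Fin s → ℝ) (j : Fin s) (k : Fin (L + 1)) :
    (vand L s ω)ᵀ j k = Complex.exp (-(2 * π * Complex.I * ω j)) ^ (k : ℕ) := by
  rw [← Complex.exp_nat_mul]
  simp only [Matrix.transpose_apply, vand, Matrix.of_apply]
  ring_nf

lemma toEuclideanLin_vand_transpose_surjective {n s : ℕ} {ω : Fin s → ℝ}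
    (hdist : Function.Injective ω) (hω : ∀ j, ω j ∈ Set.Ico (0 : ℝ) 1) (hsn : s ≤ n + 1) :
    Function.Surjective (Matrix.toEuclideanLin (vand n s ω)ᵀ) :=
  Matrix.toEuclideanLin_surjective_of_apply_eq_pow
    (fun a b hab => hdist (injOn_exp_neg_two_pi_I_mul (hω a) (hω b) hab)) hsn
    (vand_transpose_apply n s ω)

lemma phiVec_ne_zero (L : ℕ) (t : ℝ) : phiVec L t ≠ 0 := fun h => by
  have h0 := congrArg (fun v : EuclideanSpace ℂ (Fin (L + 1)) => v 0) h
  simp [phiVec] at h0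

theorem stmt12_general (s L M : ℕ)
    (hMs : s ≤ M - L + 1)
    (ω : Fin s → ℝ) (hdist : Function.Injective ω)
    (hω : ∀ j, ω j ∈ Set.Ico (0 : ℝ) 1)
    (x : Fin s → ℂ) (hx : ∀ j, x j ≠ 0)
    (xmin : ℝ) (hxmin : IsLeast (Set.range fun j => ‖x j‖) xmin)
    (H E : Matrix (Fin (L + 1)) (Fin (M - L + 1)) ℂ)
    (hH : H = vand L s ω * Matrix.diagonal x * (vand (M - L) s ω)ᵀ)
    -- a singular value decomposition of the noisy matrix `H^ε = H + E`
    (Uε : Matrix (Fin (L + 1)) (Fin (L + 1)) ℂ)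
    (hUε : Uε ∈ Matrix.unitaryGroup (Fin (L + 1)) ℂ)
    (Vε : Matrix (Fin (M - L + 1)) (Fin (M - L + 1)) ℂ)
    (hVε : Vε ∈ Matrix.unitaryGroup (Fin (M - L + 1)) ℂ)
    (σε : ℕ → ℝ) (hσanti : Antitone σε) (hσnonneg : ∀ i, 0 ≤ σε i)
    (hSVD : H + E = Uε * svdDiag (L + 1) (M - L + 1) σε * Vεᴴ)
    (P2ε : Matrix (Fin (L + 1)) (Fin (L + 1)) ℂ)
    (hP2ε : P2ε = Uε *
      Matrix.diagonal (fun i : Fin (L + 1) => if (i : ℕ) < s then (0 : ℂ) else 1) * Uεᴴ)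
    (Rε : ℝ → ℝ)
    (hRε : ∀ t, Rε t = ‖Matrix.toEuclideanLin P2ε (phiVec L t)‖ / ‖phiVec L t‖) :
    ∀ j, Rε (ω j) ≤
      2 * mopNorm E / (xmin * sigmaMinNZ ((vand (M - L) s ω)ᵀ) * ‖phiVec L (ω j)‖) := by
  intro j
  set Ψ := (vand (M - L) s ω)ᵀ
  have hΨ : Function.Surjective (Matrix.toEuclideanLin Ψ) :=
    toEuclideanLin_vand_transpose_surjective hdist hω hMs
  have hrank : H.rank ≤ s := hH ▸ (Matrix.rank_mul_le_right _ _).trans (Matrix.rank_le_height _)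
  have hPH : ‖P2ε * H‖ ≤ 2 * mopNorm E := by
    have := l2_opNorm_tailProj_mul_le_two_mul hUε hVε hSVD hσanti hσnonneg hrank
    rw [add_sub_cancel_left] at this
    exact hP2ε ▸ this
  have hcol : ‖x j‖ * sigmaMinNZ Ψ * ‖Matrix.toEuclideanLin P2ε (phiVec L (ω j))‖ ≤
      ‖P2ε * H‖ := by
    rw [hH]
    exact norm_mul_sigmaMinNZ_mul_norm_le P2ε (vand L s ω) x hΨ j
  have hσ_pos : 0 < sigmaMinNZ Ψ := sigmaMinNZ_pos fun h => by
    obtain ⟨v, hv⟩ := hΨ (EuclideanSpace.single j 1)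
    simp [h, eq_comm (a := (0 : EuclideanSpace ℂ (Fin s)))] at hv
  have hxmin_pos : 0 < xmin := by
    obtain ⟨i, rfl⟩ := hxmin.1
    exact norm_pos_iff.mpr (hx i)
  set φ := phiVec L (ω j)
  have hφ_pos : 0 < ‖φ‖ := norm_pos_iff.mpr (phiVec_ne_zero L (ω j))
  rw [hRε, div_le_div_iff₀ hφ_pos (by positivity)]
  calc ‖Matrix.toEuclideanLin P2ε φ‖ * (xmin * sigmaMinNZ Ψ * ‖φ‖)
      = xmin * sigmaMinNZ Ψ * ‖Matrix.toEuclideanLin P2ε φ‖ * ‖φ‖ := by ring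
    _ ≤ ‖x j‖ * sigmaMinNZ Ψ * ‖Matrix.toEuclideanLin P2ε φ‖ * ‖φ‖ := by
        gcongr
        exact hxmin.2 ⟨j, rfl⟩
    _ ≤ 2 * mopNorm E * ‖φ‖ := mul_le_mul_of_nonneg_right (hcol.trans hPH) hφ_pos.le

theorem stmt12 (s L M : ℕ) (hs : 1 ≤ s) (hL : 1 ≤ L) (hLM : L < M)
    (hLs : s ≤ L) (hMs : s ≤ M - L + 1)
    (ω : Fin s → ℝ) (hdist : Function.Injective ω)
    (hω : ∀ j, ω j ∈ Set.Ico (0 : ℝ) 1)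
    (x : Fin s → ℂ) (hx : ∀ j, x j ≠ 0)
    (xmin : ℝ) (hxmin : IsLeast (Set.range fun j => ‖x j‖) xmin)
    (H E : Matrix (Fin (L + 1)) (Fin (M - L + 1)) ℂ)
    (hH : H = vand L s ω * Matrix.diagonal x * (vand (M - L) s ω)ᵀ)
    (hE : mopNorm E < sigmaMinNZ H)
    -- a singular value decomposition of the noisy matrix `H^ε = H + E`
    (Uε : Matrix (Fin (L + 1)) (Fin (L + 1)) ℂ)
    (hUε : Uε ∈ Matrix.unitaryGroup (Fin (L + 1)) ℂ)
    (Vε : Matrix (Fin (M - L + 1)) (Fin (M - L + 1)) ℂ)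
    (hVε : Vε ∈ Matrix.unitaryGroup (Fin (M - L + 1)) ℂ)
    (σε : ℕ → ℝ) (hσanti : Antitone σε) (hσnonneg : ∀ i, 0 ≤ σε i)
    (hSVD : H + E = Uε * svdDiag (L + 1) (M - L + 1) σε * Vεᴴ)
    (P2ε : Matrix (Fin (L + 1)) (Fin (L + 1)) ℂ)
    (hP2ε : P2ε = Uε *
      Matrix.diagonal (fun i : Fin (L + 1) => if (i : ℕ) < s then (0 : ℂ) else 1) * Uεᴴ)
    (Rε : ℝ → ℝ)
    (hRε : ∀ t, Rε t = ‖Matrix.toEuclideanLin P2ε (phiVec L t)‖ / ‖phiVec L t‖) :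
    ∀ j, Rε (ω j) ≤
      2 * mopNorm E / (xmin * sigmaMinNZ ((vand (M - L) s ω)ᵀ) * ‖phiVec L (ω j)‖) :=
  stmt12_general s L M hMs ω hdist hω x hx xmin hxmin H E hH Uε hUε Vε hVε σε hσanti hσnonneg hSVD
    P2ε hP2ε Rε hRε
end
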